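/- Let Q be a finite index set where each index i has a sensitive attribute s_i ∈ {a,b}, with group sizes N_a = #{i : s_i = a} > 0 and N_b = #{i : s_i = b} > 0. Let o_h, o_m : Q → {0,1} be two outcome assignments, let k_a be the number of indices i with s_i = a at which o_h(i) ≠ o_m(i), and let k_b be the number of indices i with s_i = b at which o_h(i) ≠ o_m(i). Then the empirical demographic parity gaps X_h and X_m of o_h and o_m satisfy |X_h − X_m| ≤ k_a/N_a + k_b/N_b. In particular, if ε = |X_h − X_m| and p_a = k_a/N_a, p_b = k_b/N_b, then ε ≤ p_a + p_b. -/

import Mathlib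

/-!
Changing one outcome from `o_h` to `o_m` moves the positive count of its group by at most one,
so the positive rate of a group of size `N` moves by at most `k / N`, where `k` counts the
changed outcomes in that group. The parity gap is the absolute difference of the two rates,
so by the reverse triangle inequality it moves by at most `k_a / N_a + k_b / N_b`.
-/

open Finset

section

variable {Q : Type*}

/-- Division by zero makes this `0` when `S` is empty. -/
noncomputable def positiveRate (S : Finset Q) (o : Q → Bool) : ℝ :=
  (#(S.filter fun i => o i = true) : ℝ) / #S

noncomputable def parityGap (A B : Finset Q) (o : Q → Bool) : ℝ :=
  |positiveRate A o - positiveRate B o|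

theorem card_filter_le_card_filter_add_card_filter_ne (S : Finset Q) (p q : Q → Bool) :
    #(S.filter fun i => p i = true)
      ≤ #(S.filter fun i => q i = true) + #(S.filter fun i => p i ≠ q i) := by
  classical
  calc #(S.filter fun i => p i = true)
      ≤ #((S.filter fun i => q i = true) ∪ S.filter fun i => p i ≠ q i) := by
        refine card_le_card fun i hi => ?_
        simp only [mem_union, mem_filter] at hi ⊢
        cases hq : q i <;> simp_all
    _ ≤ _ := card_union_le _ _

theorem abs_card_filter_sub_card_filter_le (S : Finset Q) (p q : Q → Bool) :
    |(#(S.filter fun i => p i = true) : ℝ) - #(S.filter fun i => q i = true)|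
      ≤ #(S.filter fun i => p i ≠ q i) := by
  have hqp := card_filter_le_card_filter_add_card_filter_ne S q p
  simp only [ne_comm (a := q _)] at hqp
  rw [abs_sub_le_iff, sub_le_iff_le_add', sub_le_iff_le_add']
  exact ⟨mod_cast card_filter_le_card_filter_add_card_filter_ne S p q, mod_cast hqp⟩

theorem abs_positiveRate_sub_le (S : Finset Q) (p q : Q → Bool) :
    |positiveRate S p - positiveRate S q| ≤ (#(S.filter fun i => p i ≠ q i) : ℝ) / #S := by
  rw [positiveRate, positiveRate, ← sub_div, abs_div, Nat.abs_cast]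
  exact div_le_div_of_nonneg_right (abs_card_filter_sub_card_filter_le S p q) (Nat.cast_nonneg _)

theorem abs_parityGap_sub_le (A B : Finset Q) (p q : Q → Bool) :
    |parityGap A B p - parityGap A B q|
      ≤ (#(A.filter fun i => p i ≠ q i) : ℝ) / #A + (#(B.filter fun i => p i ≠ q i) : ℝ) / #B :=
  calc |parityGap A B p - parityGap A B q|
      ≤ |(positiveRate A p - positiveRate B p) - (positiveRate A q - positiveRate B q)| :=
        abs_abs_sub_abs_le_abs_sub _ _
    _ ≤ |positiveRate A p - positiveRate A q| + |positiveRate B p - positiveRate B q| := by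
        rw [sub_sub_sub_comm]
        exact abs_sub _ _
    _ ≤ _ := add_le_add (abs_positiveRate_sub_le A p q) (abs_positiveRate_sub_le B p q)

end

theorem gap_deviation_le_modified_fractions_general
    {Q : Type*}
    (oh om : Q → Bool)
    (A B : Finset Q)
    (ka kb : ℕ)
    (hka : ka = (A.filter (fun i => oh i ≠ om i)).card)
    (hkb : kb = (B.filter (fun i => oh i ≠ om i)).card)
    (Xh Xm ε pa pb : ℝ)
    (hXh : Xh = |((A.filter (fun i => oh i = true)).card : ℝ) / (A.card : ℝ)
              - ((B.filter (fun i => oh i = true)).card : ℝ) / (B.card : ℝ)|)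
    (hXm : Xm = |((A.filter (fun i => om i = true)).card : ℝ) / (A.card : ℝ)
              - ((B.filter (fun i => om i = true)).card : ℝ) / (B.card : ℝ)|)
    (hε : ε = |Xh - Xm|)
    (hpa : pa = (ka : ℝ) / (A.card : ℝ)) (hpb : pb = (kb : ℝ) / (B.card : ℝ)) :
    |Xh - Xm| ≤ (ka : ℝ) / (A.card : ℝ) + (kb : ℝ) / (B.card : ℝ) ∧ ε ≤ pa + pb := by
  have key : |Xh - Xm| ≤ (ka : ℝ) / (A.card : ℝ) + (kb : ℝ) / (B.card : ℝ) := by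
    subst hXh hXm hka hkb
    exact abs_parityGap_sub_le A B oh om
  subst hε hpa hpb
  exact ⟨key, key⟩

/-- If `k_a` (resp. `k_b`) is the number of group-`a` (resp. group-`b`)
indices at which the honest and measured outcomes differ, then the demographic parity
gaps satisfy `|X_h - X_m| ≤ k_a/N_a + k_b/N_b`; in particular, with `ε = |X_h - X_m|`,
`p_a = k_a/N_a`, and `p_b = k_b/N_b`, we have `ε ≤ p_a + p_b`. -/
theorem gap_deviation_le_modified_fractions
    {Q : Type*} [Fintype Q] [DecidableEq Q]
    (s : Q → Bool) (oh om : Q → Bool)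
    (A B : Finset Q)
    (hA : A = Finset.univ.filter (fun i => s i = true))
    (hB : B = Finset.univ.filter (fun i => s i = false))
    (hNa : 0 < A.card) (hNb : 0 < B.card)
    (ka kb : ℕ)
    (hka : ka = (A.filter (fun i => oh i ≠ om i)).card)
    (hkb : kb = (B.filter (fun i => oh i ≠ om i)).card)
    (Xh Xm ε pa pb : ℝ)
    (hXh : Xh = |((A.filter (fun i => oh i = true)).card : ℝ) / (A.card : ℝ)
              - ((B.filter (fun i => oh i = true)).card : ℝ) / (B.card : ℝ)|)
    (hXm : Xm = |((A.filter (fun i => om i = true)).card : ℝ) / (A.card : ℝ)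
              - ((B.filter (fun i => om i = true)).card : ℝ) / (B.card : ℝ)|)
    (hε : ε = |Xh - Xm|)
    (hpa : pa = (ka : ℝ) / (A.card : ℝ)) (hpb : pb = (kb : ℝ) / (B.card : ℝ)) :
    |Xh - Xm| ≤ (ka : ℝ) / (A.card : ℝ) + (kb : ℝ) / (B.card : ℝ) ∧ ε ≤ pa + pb :=
  gap_deviation_le_modified_fractions_general oh om A B ka kb hka hkb Xh Xm ε pa pb hXh hXm hε hpa
    hpb
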